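/- The partial order ⪯ on the monoid Γ is compatible with multiplication: if [u] ⪯ [v] then [w][u] ⪯ [w][v] and [u][w] ⪯ [v][w] for all reduced u, v, w. -/

import Mathlib

structure Letter (N : ℕ) where
  lo : ℕ
  hi : ℕ
  lo_le_hi : lo ≤ hi
  hi_le : hi ≤ N

namespace PS

/-- `t` is a (non-strict) subletter of `s`. -/
def Sub {N : ℕ} (t s : Letter N) : Prop := s.lo ≤ t.lo ∧ t.hi ≤ s.hi

/-- `t` is a proper subletter of `s`. -/
def PSub {N : ℕ} (t s : Letter N) : Prop := Sub t s ∧ t ≠ s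

/-- Two letters commute iff they have distance at least 2. -/
def Comm {N : ℕ} (s t : Letter N) : Prop := s.hi + 2 ≤ t.lo ∨ t.hi + 2 ≤ s.lo

abbrev Word (N : ℕ) := List (Letter N)

/-- Commutation step: swap two adjacent commuting letters. -/
def SwapStep {N : ℕ} (u v : Word N) : Prop :=
  ∃ (x y : Word N) (s t : Letter N),
    Comm s t ∧ u = x ++ s :: t :: y ∧ v = x ++ t :: s :: y

/-- Cancellation step: replace an occurrence `s·t` or `t·s` by `s`, when `t ⊆ s`. -/
def CancelStep {N : ℕ} (u v : Word N) : Prop :=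
  ∃ (x y : Word N) (s t : Letter N),
    Sub t s ∧ (u = x ++ s :: t :: y ∨ u = x ++ t :: s :: y) ∧ v = x ++ s :: y

/-- Splitting step: replace an occurrence `s·s` by a (possibly empty) product of
proper subletters of `s`. -/
def SplitStep {N : ℕ} (u v : Word N) : Prop :=
  ∃ (x y : Word N) (s : Letter N) (l : Word N),
    (∀ t ∈ l, PSub t s) ∧ u = x ++ s :: s :: y ∧ v = x ++ l ++ y

/-- Commutation-equivalence of words. -/
def WEquiv {N : ℕ} : Word N → Word N → Prop := Relation.ReflTransGen SwapStep

/-- Reduction: finitely many commutation and cancellation steps. -/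
def Red {N : ℕ} : Word N → Word N → Prop :=
  Relation.ReflTransGen (fun u v => SwapStep u v ∨ CancelStep u v)

/-- Strong reduction: also allowing splitting steps. -/
def SRed {N : ℕ} : Word N → Word N → Prop :=
  Relation.ReflTransGen (fun u v => SwapStep u v ∨ CancelStep u v ∨ SplitStep u v)

/-- The congruence defining the monoid Γ. -/
def GammaRel {N : ℕ} : Word N → Word N → Prop :=
  Relation.EqvGen (fun u v => SwapStep u v ∨ CancelStep u v)

/-- A word is reduced if there is no pair of occurrences `i ≠ j` with `sᵢ ⊆ sⱼ`
such that `sᵢ` commutes with every letter strictly between them. -/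
def Reduced {N : ℕ} (w : Word N) : Prop :=
  ¬ ∃ (x y z : Word N) (a b : Letter N),
      w = x ++ a :: (y ++ b :: z) ∧
      ((Sub a b ∧ ∀ r ∈ y, Comm a r) ∨ (Sub b a ∧ ∀ r ∈ y, Comm b r))

/-- The letter `s` is left-absorbed by the word `v`. -/
def LAbsLetter {N : ℕ} (s : Letter N) (v : Word N) : Prop :=
  ∃ (x : Word N) (t : Letter N) (y : Word N),
    v = x ++ t :: y ∧ Sub s t ∧ ∀ r ∈ x, Comm s r

/-- The letter `s` is properly left-absorbed by the word `v`. -/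
def PLAbsLetter {N : ℕ} (s : Letter N) (v : Word N) : Prop :=
  ∃ (x : Word N) (t : Letter N) (y : Word N),
    v = x ++ t :: y ∧ PSub s t ∧ ∀ r ∈ x, Comm s r

/-- The letter `s` is right-absorbed by the word `w`. -/
def RAbsLetter {N : ℕ} (s : Letter N) (w : Word N) : Prop :=
  ∃ (x : Word N) (t : Letter N) (y : Word N),
    w = x ++ t :: y ∧ Sub s t ∧ ∀ r ∈ y, Comm s r

/-- The letter `s` is properly right-absorbed by the word `w`. -/
def PRAbsLetter {N : ℕ} (s : Letter N) (w : Word N) : Prop :=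
  ∃ (x : Word N) (t : Letter N) (y : Word N),
    w = x ++ t :: y ∧ PSub s t ∧ ∀ r ∈ y, Comm s r

/-- The word `u` is left-absorbed by `v`. -/
def LAbsWord {N : ℕ} (u v : Word N) : Prop := ∀ s ∈ u, LAbsLetter s v

/-- `v` bites `u` from the right: `v` left-absorbs some letter of the final segment of `u`. -/
def BitesRight {N : ℕ} (v u : Word N) : Prop :=
  ∃ (x : Word N) (s : Letter N) (y : Word N),
    u = x ++ s :: y ∧ (∀ r ∈ y, Comm s r) ∧ LAbsLetter s v

end PS

namespace PS

/-- `Repl v u b`: `u` is obtained from `v` by keeping some letters and replacing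
others by (possibly empty) products of proper subletters; `b = true` iff at least
one replacement occurred. -/
inductive Repl {N : ℕ} : Word N → Word N → Bool → Prop
  | nil : Repl [] [] false
  | keep {v u : Word N} {b : Bool} (s : Letter N) :
      Repl v u b → Repl (s :: v) (s :: u) b
  | split {v u : Word N} {b : Bool} (s : Letter N) (l : Word N)
      (hl : ∀ t ∈ l, PSub t s) :
      Repl v u b → Repl (s :: v) (l ++ u) true

/-- `u ≺ v`: some commutation-permutation of `u` is obtained from `v` by replacing
at least one letter of `v` by a product of proper subletters. -/
def Prec {N : ℕ} (u v : Word N) : Prop :=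
  ∃ u' : Word N, WEquiv u u' ∧ Repl v u' true

/-- `u ⪯ v`. -/
def Preceq {N : ℕ} (u v : Word N) : Prop := Prec u v ∨ WEquiv u v

end PS

/-!
`a ⪯ q` holds iff a commutation-permutation of `a` arises from `q` by replacing some, possibly
no, letters by products of proper subletters. In this form `⪯` is a preorder compatible with
concatenation, and a reduction `p ⟶ a` gives `a ⪯ p`. So it suffices that `a ⪯ q` survives
reductions `q ⟶ q'` of the right-hand side when `a` is reduced. A commutation of `s t` in `q`
is mirrored by commuting the images of `s` and `t`, whose letters commute since they are
subletters of `s` and `t`. A cancellation of `s t` (or `t s`) to `s` with `t ⊆ s` is absorbed: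
the images of `s` and `t` are adjacent in the reduced word, so together they form a reduced
word of subletters of `s`, and such a word is either `s` itself or made of proper subletters,
i.e. an image of `s`. Reducedness of `a` is inherited by its commutation-permutations.
-/

namespace PS

variable {N : ℕ}

theorem Sub.refl (s : Letter N) : Sub s s := ⟨le_rfl, le_rfl⟩

theorem Sub.trans {a b c : Letter N} (h₁ : Sub a b) (h₂ : Sub b c) : Sub a c :=
  ⟨h₂.1.trans h₁.1, h₁.2.trans h₂.2⟩

theorem Sub.antisymm {a b : Letter N} (h₁ : Sub a b) (h₂ : Sub b a) : a = b := by
  cases a; cases b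
  simp only [Sub] at h₁ h₂
  simp only [Letter.mk.injEq]
  omega

theorem Sub.trans_psub {a b c : Letter N} (h₁ : Sub a b) (h₂ : PSub b c) : PSub a c :=
  ⟨h₁.trans h₂.1, fun hac => h₂.2 (h₂.1.antisymm (hac ▸ h₁))⟩

theorem Comm.symm {s t : Letter N} (h : Comm s t) : Comm t s := Or.symm h

theorem Comm.mono {s t a b : Letter N} (h : Comm s t) (ha : Sub a s) (hb : Sub b t) :
    Comm a b := by
  unfold Comm at *
  obtain ⟨_, _⟩ := ha
  obtain ⟨_, _⟩ := hb
  omega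

theorem Sub.not_comm {a b : Letter N} (h : Sub a b) : ¬ Comm a b := by
  have := a.lo_le_hi
  unfold Comm
  obtain ⟨_, _⟩ := h
  omega

theorem SwapStep.symm {u v : Word N} (h : SwapStep u v) : SwapStep v u := by
  obtain ⟨x, y, s, t, hst, rfl, rfl⟩ := h
  exact ⟨x, y, t, s, hst.symm, rfl, rfl⟩

theorem SwapStep.reverse {u v : Word N} (h : SwapStep u v) : SwapStep u.reverse v.reverse := by
  obtain ⟨x, y, s, t, hst, rfl, rfl⟩ := h
  exact ⟨y.reverse, x.reverse, t, s, hst.symm, by simp, by simp⟩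

theorem WEquiv.refl (w : Word N) : WEquiv w w := Relation.ReflTransGen.refl

theorem WEquiv.trans {u v w : Word N} (h₁ : WEquiv u v) (h₂ : WEquiv v w) : WEquiv u w :=
  Relation.ReflTransGen.trans h₁ h₂

theorem WEquiv.symm {u v : Word N} (h : WEquiv u v) : WEquiv v u := by
  induction h with
  | refl => exact .refl _
  | tail _ hs ih => exact (Relation.ReflTransGen.single hs.symm).trans ih

theorem WEquiv.swap {s t : Letter N} (h : Comm s t) : WEquiv [s, t] [t, s] :=
  .single ⟨[], [], s, t, h, rfl, rfl⟩

theorem WEquiv.append {u u' v v' : Word N} (hu : WEquiv u u') (hv : WEquiv v v') :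
    WEquiv (u ++ v) (u' ++ v') := by
  have left : ∀ {v v'} (w : Word N), SwapStep v v' → SwapStep (w ++ v) (w ++ v') := by
    rintro _ _ w ⟨x, y, s, t, hst, rfl, rfl⟩
    exact ⟨w ++ x, y, s, t, hst, by simp, by simp⟩
  have right : ∀ {u u'} (w : Word N), SwapStep u u' → SwapStep (u ++ w) (u' ++ w) := by
    rintro _ _ w ⟨x, y, s, t, hst, rfl, rfl⟩
    exact ⟨x, y ++ w, s, t, hst, by simp, by simp⟩
  exact (Relation.ReflTransGen.lift (· ++ v) (fun _ _ => right v) _ _ hu).trans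
    (Relation.ReflTransGen.lift (u' ++ ·) (fun _ _ => left u') _ _ hv)

theorem WEquiv.cons_append_comm {s : Letter N} {Q : Word N} (h : ∀ q ∈ Q, Comm s q) :
    WEquiv (s :: Q) (Q ++ [s]) := by
  induction Q with
  | nil => exact .refl _
  | cons q Q ih =>
    simp only [List.forall_mem_cons] at h
    have swap_head : WEquiv (s :: q :: Q) (q :: s :: Q) := WEquiv.append (.swap h.1) (.refl Q)
    have move_tail : WEquiv (q :: s :: Q) (q :: (Q ++ [s])) := WEquiv.append (.refl [q]) (ih h.2)
    exact swap_head.trans move_tail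

theorem WEquiv.append_comm {P Q : Word N} (h : ∀ p ∈ P, ∀ q ∈ Q, Comm p q) :
    WEquiv (P ++ Q) (Q ++ P) := by
  induction P with
  | nil => simpa using .refl Q
  | cons p P ih =>
    simp only [List.forall_mem_cons] at h
    have move_tail : WEquiv (p :: (P ++ Q)) (p :: (Q ++ P)) := WEquiv.append (.refl [p]) (ih h.2)
    have move_head : WEquiv (p :: Q ++ P) (Q ++ [p] ++ P) :=
      WEquiv.append (.cons_append_comm h.1) (.refl P)
    simpa using move_tail.trans move_head

theorem lAbsLetter_cons_iff {s t : Letter N} {v : Word N} :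
    LAbsLetter s (t :: v) ↔ Sub s t ∨ (Comm s t ∧ LAbsLetter s v) := by
  constructor
  · rintro ⟨_ | ⟨r, x⟩, t', y, h, hs, hx⟩ <;> simp only [List.nil_append, List.cons_append,
      List.cons.injEq] at h <;> obtain ⟨rfl, rfl⟩ := h
    · exact Or.inl hs
    · simp only [List.forall_mem_cons] at hx
      exact Or.inr ⟨hx.1, x, t', y, rfl, hs, hx.2⟩
  · rintro (hs | ⟨hc, x, t', y, rfl, hs, hx⟩)
    · exact ⟨[], t, v, rfl, hs, by simp⟩
    · exact ⟨t :: x, t', y, rfl, hs, List.forall_mem_cons.mpr ⟨hc, hx⟩⟩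

theorem LAbsLetter.append_left {s : Letter N} {Z Z' : Word N} (X : Word N)
    (hZ : LAbsLetter s Z → LAbsLetter s Z') : LAbsLetter s (X ++ Z) → LAbsLetter s (X ++ Z') := by
  induction X with
  | nil => exact hZ
  | cons t X ih =>
    simp only [List.cons_append, lAbsLetter_cons_iff]
    exact Or.imp_right (And.imp_right ih)

theorem LAbsLetter.swap_head {s p q : Letter N} {v : Word N} (hpq : Comm p q)
    (h : LAbsLetter s (p :: q :: v)) : LAbsLetter s (q :: p :: v) := by
  simp only [lAbsLetter_cons_iff] at h ⊢
  rcases h with hsp | ⟨hcp, hsq | ⟨hcq, hv⟩⟩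
  · exact Or.inr ⟨hpq.mono hsp (.refl q), Or.inl hsp⟩
  · exact Or.inl hsq
  · exact Or.inr ⟨hcq, Or.inr ⟨hcp, hv⟩⟩

def LReducible (w : Word N) : Prop := ∃ x a r, w = x ++ a :: r ∧ LAbsLetter a r

theorem lReducible_cons_iff {a : Letter N} {w : Word N} :
    LReducible (a :: w) ↔ LAbsLetter a w ∨ LReducible w := by
  constructor
  · rintro ⟨_ | ⟨c, x⟩, b, r, h, hb⟩ <;> simp only [List.nil_append, List.cons_append,
      List.cons.injEq] at h <;> obtain ⟨rfl, rfl⟩ := h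
    · exact Or.inl hb
    · exact Or.inr ⟨x, b, r, rfl, hb⟩
  · rintro (h | ⟨x, b, r, rfl, h⟩)
    · exact ⟨[], a, w, rfl, h⟩
    · exact ⟨a :: x, b, r, rfl, h⟩

theorem LReducible.append_left {Z Z' : Word N} (X : Word N)
    (hZ : LReducible Z → LReducible Z') (habs : ∀ a, LAbsLetter a Z → LAbsLetter a Z') :
    LReducible (X ++ Z) → LReducible (X ++ Z') := by
  induction X with
  | nil => exact hZ
  | cons a X ih =>
    simp only [List.cons_append, lReducible_cons_iff]
    exact Or.imp (LAbsLetter.append_left X (habs a)) ih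

theorem LReducible.swap_head {p q : Letter N} {v : Word N} (hpq : Comm p q)
    (h : LReducible (p :: q :: v)) : LReducible (q :: p :: v) := by
  simp only [lReducible_cons_iff, lAbsLetter_cons_iff] at h ⊢
  rcases h with (hsub | ⟨_, hp⟩) | hq | hv
  · exact absurd hpq hsub.not_comm
  · exact Or.inr (Or.inl hp)
  · exact Or.inl (Or.inr ⟨hpq.symm, hq⟩)
  · exact Or.inr (Or.inr hv)

theorem LReducible.of_swapStep {w w' : Word N} (hw : LReducible w) (h : SwapStep w w') :
    LReducible w' := by
  obtain ⟨X, Y, p, q, hpq, rfl, rfl⟩ := h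
  exact LReducible.append_left X (.swap_head hpq) (fun _ => .swap_head hpq) hw

/-- The two alternatives of the definition of `Reduced` are exchanged by reversing the word. -/
theorem not_reduced_iff {w : Word N} : ¬ Reduced w ↔ LReducible w ∨ LReducible w.reverse := by
  rw [Reduced, not_not]
  constructor
  · rintro ⟨x, y, z, a, b, rfl, ⟨hab, hy⟩ | ⟨hba, hy⟩⟩
    · exact Or.inl ⟨x, a, y ++ b :: z, rfl, y, b, z, rfl, hab, hy⟩
    · refine Or.inr ⟨z.reverse, b, y.reverse ++ a :: x.reverse, by simp,
        y.reverse, a, x.reverse, rfl, hba, by simpa using hy⟩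
  · rintro (⟨x, a, _, rfl, y, b, z, rfl, hab, hy⟩ | ⟨x, a, _, hw, y, b, z, rfl, hab, hy⟩)
    · exact ⟨x, y, z, a, b, rfl, Or.inl ⟨hab, hy⟩⟩
    · rw [List.reverse_eq_iff] at hw
      exact ⟨z.reverse, y.reverse, x.reverse, b, a, by simp [hw],
        Or.inr ⟨hab, by simpa using hy⟩⟩

theorem Reduced.of_swapStep {w w' : Word N} (hw : Reduced w) (h : SwapStep w w') :
    Reduced w' := by
  by_contra hw'
  rw [not_reduced_iff] at hw'
  exact not_reduced_iff.mpr (hw'.imp (·.of_swapStep h.symm) (·.of_swapStep h.symm.reverse)) hw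

theorem Reduced.of_wequiv {w w' : Word N} (hw : Reduced w) (h : WEquiv w w') : Reduced w' := by
  induction h with
  | refl => exact hw
  | tail _ hs ih => exact ih.of_swapStep hs

theorem Reduced.of_infix {w v : Word N} (hw : Reduced w) (hv : v <:+: w) : Reduced v := by
  obtain ⟨A, C, rfl⟩ := hv
  rintro ⟨x, y, z, a, b, rfl, hab⟩
  exact hw ⟨A ++ x, y, z ++ C, a, b, by simp, hab⟩

theorem Reduced.not_sub_or_sub {p q : Letter N} (h : Reduced [p, q]) : ¬ (Sub p q ∨ Sub q p) :=
  fun hpq => h ⟨[], [], [], p, q, rfl, hpq.imp (⟨·, by simp⟩) (⟨·, by simp⟩)⟩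

theorem Reduced.eq_singleton {l : Word N} {s : Letter N} (h : Reduced l)
    (hl : ∀ r ∈ l, Sub r s) (hs : s ∈ l) : l = [s] := by
  obtain ⟨A, B, rfl⟩ := List.append_of_mem hs
  cases B with
  | cons r B =>
    have : Reduced [s, r] := h.of_infix ⟨A, B, by simp⟩
    exact absurd (Or.inr (hl r (by simp))) this.not_sub_or_sub
  | nil =>
    rcases List.eq_nil_or_concat A with rfl | ⟨A, r, rfl⟩
    · rfl
    · have : Reduced [r, s] := h.of_infix ⟨A, [], by simp⟩
      exact absurd (Or.inl (hl r (by simp))) this.not_sub_or_sub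

def ReplLetter (s : Letter N) (l : Word N) : Prop := l = [s] ∨ ∀ t ∈ l, PSub t s

def ReplAny (v u : Word N) : Prop := ∃ b, Repl v u b

theorem ReplLetter.refl (s : Letter N) : ReplLetter s [s] := Or.inl rfl

theorem ReplLetter.sub {s : Letter N} {l : Word N} (h : ReplLetter s l) : ∀ r ∈ l, Sub r s := by
  rcases h with rfl | h
  · simpa using Sub.refl s
  · exact fun r hr => (h r hr).1

theorem replLetter_of_reduced {s : Letter N} {l : Word N} (hl : ∀ r ∈ l, Sub r s)
    (h : Reduced l) : ReplLetter s l := by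
  by_cases hs : s ∈ l
  · exact Or.inl (h.eq_singleton hl hs)
  · exact Or.inr fun r hr => ⟨hl r hr, fun hrs => hs (hrs ▸ hr)⟩

theorem Repl.eq_of_false {v u : Word N} (h : Repl v u false) : u = v := by
  generalize hb : false = b at h
  induction h with
  | nil => rfl
  | keep s _ ih => rw [ih hb]
  | split => exact absurd hb Bool.false_ne_true

theorem replAny_nil_iff {u : Word N} : ReplAny [] u ↔ u = [] := by
  constructor
  · rintro ⟨b, h⟩
    cases h
    rfl
  · rintro rfl
    exact ⟨false, .nil⟩

theorem replAny_cons_iff {s : Letter N} {v u : Word N} :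
    ReplAny (s :: v) u ↔ ∃ l u', u = l ++ u' ∧ ReplLetter s l ∧ ReplAny v u' := by
  constructor
  · rintro ⟨b, h⟩
    cases h with
    | keep _ h => exact ⟨[s], _, rfl, .refl s, _, h⟩
    | split _ l hl h => exact ⟨l, _, rfl, Or.inr hl, _, h⟩
  · rintro ⟨l, u', rfl, rfl | hl, b, h⟩
    · exact ⟨b, .keep s h⟩
    · exact ⟨true, .split s l hl h⟩

theorem ReplAny.refl (v : Word N) : ReplAny v v := by
  induction v with
  | nil => exact replAny_nil_iff.mpr rfl
  | cons s v ih => exact replAny_cons_iff.mpr ⟨[s], v, rfl, .refl s, ih⟩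

theorem replAny_singleton_iff {s : Letter N} {l : Word N} : ReplAny [s] l ↔ ReplLetter s l := by
  simp [replAny_cons_iff, replAny_nil_iff]

theorem replAny_append_iff {v₁ v₂ u : Word N} :
    ReplAny (v₁ ++ v₂) u ↔ ∃ u₁ u₂, u = u₁ ++ u₂ ∧ ReplAny v₁ u₁ ∧ ReplAny v₂ u₂ := by
  induction v₁ generalizing u with
  | nil => simp [replAny_nil_iff]
  | cons s v₁ ih =>
    simp only [List.cons_append, replAny_cons_iff, ih]
    constructor
    · rintro ⟨l, _, rfl, hl, u₁, u₂, rfl, h₁, h₂⟩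
      exact ⟨l ++ u₁, u₂, by simp, ⟨l, u₁, rfl, hl, h₁⟩, h₂⟩
    · rintro ⟨_, u₂, rfl, ⟨l, u₁, rfl, hl, h₁⟩, h₂⟩
      exact ⟨l, u₁ ++ u₂, by simp, hl, u₁, u₂, rfl, h₁, h₂⟩

theorem ReplAny.exists_sub {v u : Word N} (h : ReplAny v u) : ∀ r ∈ u, ∃ t ∈ v, Sub r t := by
  induction v generalizing u with
  | nil => simp [replAny_nil_iff.mp h]
  | cons s v ih =>
    obtain ⟨l, u', rfl, hl, h⟩ := replAny_cons_iff.mp h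
    intro r hr
    rcases List.mem_append.mp hr with hr | hr
    · exact ⟨s, by simp, hl.sub r hr⟩
    · obtain ⟨t, ht, hrt⟩ := ih h r hr
      exact ⟨t, List.mem_cons_of_mem s ht, hrt⟩

theorem ReplLetter.of_replAny {s : Letter N} {l u : Word N} (hl : ReplLetter s l)
    (h : ReplAny l u) : ReplLetter s u := by
  rcases hl with rfl | hl
  · exact replAny_singleton_iff.mp h
  · refine Or.inr fun r hr => ?_
    obtain ⟨t, ht, hrt⟩ := h.exists_sub r hr
    exact hrt.trans_psub (hl t ht)

theorem ReplAny.trans {v m u : Word N} (h₁ : ReplAny v m) (h₂ : ReplAny m u) : ReplAny v u := by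
  induction v generalizing m u with
  | nil => rwa [replAny_nil_iff.mp h₁] at h₂
  | cons s v ih =>
    obtain ⟨l, m', rfl, hl, h₁⟩ := replAny_cons_iff.mp h₁
    obtain ⟨u₁, u₂, rfl, hu₁, hu₂⟩ := replAny_append_iff.mp h₂
    exact replAny_cons_iff.mpr ⟨u₁, u₂, rfl, hl.of_replAny hu₁, ih h₁ hu₂⟩

theorem replAny_append_cons_iff {x y p : Word N} {s : Letter N} :
    ReplAny (x ++ s :: y) p ↔
      ∃ A L C, p = A ++ L ++ C ∧ ReplAny x A ∧ ReplLetter s L ∧ ReplAny y C := by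
  simp only [replAny_append_iff, replAny_cons_iff]
  constructor
  · rintro ⟨A, _, rfl, hA, L, C, rfl, hL, hC⟩
    exact ⟨A, L, C, by simp, hA, hL, hC⟩
  · rintro ⟨A, L, C, rfl, hA, hL, hC⟩
    exact ⟨A, L ++ C, by simp, hA, L, C, rfl, hL, hC⟩

theorem replAny_append_cons_cons_iff {x y p : Word N} {s t : Letter N} :
    ReplAny (x ++ s :: t :: y) p ↔ ∃ A S T C, p = A ++ S ++ T ++ C ∧
      ReplAny x A ∧ ReplLetter s S ∧ ReplLetter t T ∧ ReplAny y C := by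
  simp only [replAny_append_cons_iff, replAny_cons_iff]
  constructor
  · rintro ⟨A, S, _, rfl, hA, hS, T, C, rfl, hT, hC⟩
    exact ⟨A, S, T, C, by simp, hA, hS, hT, hC⟩
  · rintro ⟨A, S, T, C, rfl, hA, hS, hT, hC⟩
    exact ⟨A, S, T ++ C, by simp, hA, hS, T, C, rfl, hT, hC⟩

theorem ReplAny.exists_wequiv_of_swapStep {q q' p : Word N} (h : ReplAny q p)
    (hq : SwapStep q q') : ∃ p', ReplAny q' p' ∧ WEquiv p p' := by
  obtain ⟨x, y, s, t, hst, rfl, rfl⟩ := hq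
  obtain ⟨A, S, T, C, rfl, hA, hS, hT, hC⟩ := replAny_append_cons_cons_iff.mp h
  have hcomm : WEquiv (S ++ T) (T ++ S) :=
    .append_comm fun a ha b hb => hst.mono (hS.sub a ha) (hT.sub b hb)
  refine ⟨A ++ T ++ S ++ C, replAny_append_cons_cons_iff.mpr ⟨A, T, S, C, rfl, hA, hT, hS, hC⟩, ?_⟩
  simpa using (WEquiv.refl A).append (hcomm.append (.refl C))

theorem ReplAny.exists_wequiv_of_wequiv {q q' p : Word N} (h : ReplAny q p)
    (hq : WEquiv q q') : ∃ p', ReplAny q' p' ∧ WEquiv p p' := by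
  induction hq with
  | refl => exact ⟨p, h, .refl p⟩
  | tail _ hs ih =>
    obtain ⟨p₁, h₁, hp₁⟩ := ih
    obtain ⟨p₂, h₂, hp₂⟩ := h₁.exists_wequiv_of_swapStep hs
    exact ⟨p₂, h₂, hp₁.trans hp₂⟩

theorem ReplAny.of_cancelStep {q q' p : Word N} (hp : Reduced p) (h : ReplAny q p)
    (hq : CancelStep q q') : ReplAny q' p := by
  obtain ⟨x, y, s, t, hts, hq, rfl⟩ := hq
  rcases hq with rfl | rfl
  · obtain ⟨A, S, T, C, rfl, hA, hS, hT, hC⟩ := replAny_append_cons_cons_iff.mp h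
    have hsub : ∀ r ∈ S ++ T, Sub r s := by
      simpa [or_imp, forall_and] using ⟨hS.sub, fun r hr => (hT.sub r hr).trans hts⟩
    exact replAny_append_cons_iff.mpr
      ⟨A, S ++ T, C, by simp, hA, replLetter_of_reduced hsub (hp.of_infix ⟨A, C, by simp⟩), hC⟩
  · obtain ⟨A, T, S, C, rfl, hA, hT, hS, hC⟩ := replAny_append_cons_cons_iff.mp h
    have hsub : ∀ r ∈ T ++ S, Sub r s := by
      simpa [or_imp, forall_and] using ⟨fun r hr => (hT.sub r hr).trans hts, hS.sub⟩
    exact replAny_append_cons_iff.mpr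
      ⟨A, T ++ S, C, by simp, hA, replLetter_of_reduced hsub (hp.of_infix ⟨A, C, by simp⟩), hC⟩

theorem CancelStep.replAny {q q' : Word N} (h : CancelStep q q') : ReplAny q q' := by
  obtain ⟨x, y, s, t, -, hq | hq, rfl⟩ := h <;> subst hq
  · exact replAny_append_cons_cons_iff.mpr
      ⟨x, [s], [], y, by simp, .refl x, .refl s, Or.inr (by simp), .refl y⟩
  · exact replAny_append_cons_cons_iff.mpr
      ⟨x, [], [s], y, by simp, .refl x, Or.inr (by simp), .refl s, .refl y⟩

theorem preceq_iff_exists_replAny {u v : Word N} :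
    Preceq u v ↔ ∃ u', WEquiv u u' ∧ ReplAny v u' := by
  constructor
  · rintro (⟨u', hw, hr⟩ | hw)
    · exact ⟨u', hw, _, hr⟩
    · exact ⟨v, hw, .refl v⟩
  · rintro ⟨u', hw, _ | _, hr⟩
    · exact Or.inr (hr.eq_of_false ▸ hw)
    · exact Or.inl ⟨u', hw, hr⟩

theorem Preceq.of_wequiv {u v : Word N} (h : WEquiv u v) : Preceq u v := Or.inr h

theorem Preceq.of_replAny {u v : Word N} (h : ReplAny v u) : Preceq u v :=
  preceq_iff_exists_replAny.mpr ⟨u, .refl u, h⟩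

theorem Preceq.trans {a m q : Word N} (h₁ : Preceq a m) (h₂ : Preceq m q) : Preceq a q := by
  obtain ⟨a', ha, hm⟩ := preceq_iff_exists_replAny.mp h₁
  obtain ⟨m', hm', hq⟩ := preceq_iff_exists_replAny.mp h₂
  obtain ⟨a'', hm'', ha'⟩ := hm.exists_wequiv_of_wequiv hm'
  exact preceq_iff_exists_replAny.mpr ⟨a'', ha.trans ha', hq.trans hm''⟩

theorem Preceq.append_left (w : Word N) {u v : Word N} (h : Preceq u v) :
    Preceq (w ++ u) (w ++ v) := by
  obtain ⟨u', hu, hv⟩ := preceq_iff_exists_replAny.mp h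
  exact preceq_iff_exists_replAny.mpr
    ⟨w ++ u', (WEquiv.refl w).append hu, replAny_append_iff.mpr ⟨w, u', rfl, .refl w, hv⟩⟩

theorem Preceq.append_right (w : Word N) {u v : Word N} (h : Preceq u v) :
    Preceq (u ++ w) (v ++ w) := by
  obtain ⟨u', hu, hv⟩ := preceq_iff_exists_replAny.mp h
  exact preceq_iff_exists_replAny.mpr
    ⟨u' ++ w, hu.append (.refl w), replAny_append_iff.mpr ⟨u', w, rfl, hv, .refl w⟩⟩

theorem Preceq.of_red {p a : Word N} (h : Red p a) : Preceq a p := by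
  induction h with
  | refl => exact .of_wequiv (.refl p)
  | tail _ hs ih =>
    rcases hs with hs | hs
    · exact (Preceq.of_wequiv (.single hs.symm)).trans ih
    · exact (Preceq.of_replAny hs.replAny).trans ih

theorem Preceq.red_right {a q q' : Word N} (h : Preceq a q) (ha : Reduced a) (hq : Red q q') :
    Preceq a q' := by
  induction hq with
  | refl => exact h
  | tail _ hs ih =>
    obtain ⟨a', ha', hr⟩ := preceq_iff_exists_replAny.mp ih
    rcases hs with hs | hs
    · obtain ⟨a'', hr', ha''⟩ := hr.exists_wequiv_of_swapStep hs
      exact preceq_iff_exists_replAny.mpr ⟨a'', ha'.trans ha'', hr'⟩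
    · exact preceq_iff_exists_replAny.mpr ⟨a', ha', hr.of_cancelStep (ha.of_wequiv ha') hs⟩

theorem Preceq.red {p q a b : Word N} (h : Preceq p q) (hp : Red p a) (ha : Reduced a)
    (hq : Red q b) : Preceq a b :=
  ((Preceq.of_red hp).trans h).red_right ha hq

end PS

open PS in
theorem preceq_compatible_with_mul_general {N : ℕ} (u v w : Word N)
    (h : Preceq u v) :
    (∀ a b : Word N, Red (w ++ u) a → Reduced a → Red (w ++ v) b → Reduced b →
      Preceq a b) ∧
    (∀ a b : Word N, Red (u ++ w) a → Reduced a → Red (v ++ w) b → Reduced b →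
      Preceq a b) :=
  ⟨fun _ _ ha hra hb _ => (h.append_left w).red ha hra hb,
    fun _ _ ha hra hb _ => (h.append_right w).red ha hra hb⟩

open PS in
/-- The order `⪯` on Γ is compatible with multiplication. -/
theorem preceq_compatible_with_mul {N : ℕ} (u v w : Word N)
    (hu : Reduced u) (hv : Reduced v) (hw : Reduced w)
    (h : Preceq u v) :
    (∀ a b : Word N, Red (w ++ u) a → Reduced a → Red (w ++ v) b → Reduced b →
      Preceq a b) ∧
    (∀ a b : Word N, Red (u ++ w) a → Reduced a → Red (v ++ w) b → Reduced b →
      Preceq a b) :=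
  preceq_compatible_with_mul_general u v w h
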